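/- If G is a finite simple graph on n ≥ 1 vertices, p ∈ (0,1), and b ≥ 1 is an integer, then 0 ≤ t_{K_{2,2b−1}}(f_{p,G}) ≤ ν_{p,G}^{2b−1} + n^{−1}. -/

import Mathlib

/- The `H`-density `t_H(W)` of a kernel `W` on the finite vertex set `V`, equipped with
the uniform probability measure: `t_H(W) = E ∏_{uv ∈ E(H)} W(x_u, x_v)` over independent
uniform `x_v`. -/
open scoped Classical in
noncomputable def graphDensity {V K : Type*} [Fintype V] [Fintype K] [LinearOrder K]
    (H : SimpleGraph K) (W : V → V → ℝ) : ℝ :=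
  (∑ x : K → V, ∏ p ∈ Finset.univ.filter (fun p : K × K => p.1 < p.2 ∧ H.Adj p.1 p.2),
    W (x p.1) (x p.2)) / (Fintype.card V : ℝ) ^ (Fintype.card K)

/-- The complete bipartite graph `K_{a,b}`, realized on `Fin (a + b)`. -/
def bipGraph (a b : ℕ) : SimpleGraph (Fin (a + b)) :=
  SimpleGraph.fromRel (fun u v => u.val < a ∧ a ≤ v.val)

/-- `W_G`, the `{0,1}`-valued adjacency kernel of the graph `G` (with `W_G(x,x) = 0`). -/
def adjKernel {V : Type*} (G : SimpleGraph V) [DecidableRel G.Adj] (x y : V) : ℝ :=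
  if G.Adj x y then 1 else 0

/-- `f_{p,G}(x,y) = W_G(x,y) − p`. -/
noncomputable def fP {V : Type*} (G : SimpleGraph V) [DecidableRel G.Adj] (p : ℝ)
    (x y : V) : ℝ :=
  adjKernel G x y - p

/-- `μ_{p,G} = max_x |E_y f_{p,G}(x,y)|`. -/
noncomputable def muP {V : Type*} [Fintype V] (G : SimpleGraph V) [DecidableRel G.Adj]
    (p : ℝ) : ℝ :=
  ⨆ x : V, |(∑ y : V, fP G p x y) / (Fintype.card V : ℝ)|

/-- `ν_{p,G} = max_{x ≠ y} max(0, E_z f_{p,G}(x,z) f_{p,G}(z,y))`. -/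
noncomputable def nuP {V : Type*} [Fintype V] (G : SimpleGraph V) [DecidableRel G.Adj]
    (p : ℝ) : ℝ :=
  ⨆ q : {q : V × V // q.1 ≠ q.2},
    max 0 ((∑ z : V, fP G p q.val.1 z * fP G p z q.val.2) / (Fintype.card V : ℝ))

/-! With `d(a,c) = E_v f(a,v) f(c,v)`, summing out the `m` right-hand vertices of `K_{2,m}`
gives `t = E_{a,c} d(a,c)^m`, while summing out the two left-hand vertices gives
`t = E_y (E_a ∏_j f(a, y_j))^2 ≥ 0`. For odd `m` the map `x ↦ x^m` is monotone, so each
off-diagonal term is at most `ν^m`, and since `|f| ≤ 1` the diagonal terms (a `1/n` fraction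
of all pairs) are at most `1`. -/

open Finset

lemma lt_and_bipGraph_adj_iff {a b : ℕ} (u v : Fin (a + b)) :
    (u < v ∧ (bipGraph a b).Adj u v) ↔ (u.val < a ∧ a ≤ v.val) := by
  simp only [bipGraph, SimpleGraph.fromRel_adj, Fin.lt_def, ne_eq, Fin.ext_iff]
  omega

lemma prod_bipGraph_edges {V : Type*} (a b : ℕ) (W : V → V → ℝ) (x : Fin (a + b) → V)
    [DecidablePred fun q : Fin (a + b) × Fin (a + b) => q.1 < q.2 ∧ (bipGraph a b).Adj q.1 q.2] :
    ∏ q ∈ univ.filter (fun q : Fin (a + b) × Fin (a + b) => q.1 < q.2 ∧ (bipGraph a b).Adj q.1 q.2),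
        W (x q.1) (x q.2) =
      ∏ i : Fin a, ∏ j : Fin b, W (x (Fin.castAdd b i)) (x (Fin.natAdd a j)) := by
  rw [prod_filter, Fintype.prod_prod_type, Fin.prod_univ_add]
  simp [Fin.prod_univ_add, lt_and_bipGraph_adj_iff, fun i : Fin a => (Fin.is_lt i).not_ge]

lemma graphDensity_bipGraph {V : Type*} [Fintype V] (a b : ℕ) (W : V → V → ℝ) :
    graphDensity (bipGraph a b) W =
      (∑ u : Fin a → V, ∑ y : Fin b → V, ∏ i, ∏ j, W (u i) (y j)) /
        (Fintype.card V : ℝ) ^ (a + b) := by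
  rw [graphDensity, Fintype.card_fin]
  simp only [prod_bipGraph_edges]
  rw [← (Fin.appendEquiv a b).sum_comp, Fintype.sum_prod_type]
  simp [Fin.appendEquiv]

lemma graphDensity_bipGraph_eq_sum_pow_left {V : Type*} [Fintype V] (a b : ℕ)
    (W : V → V → ℝ) :
    graphDensity (bipGraph a b) W =
      (∑ y : Fin b → V, (∑ v, ∏ j, W v (y j)) ^ a) / (Fintype.card V : ℝ) ^ (a + b) := by
  simp only [graphDensity_bipGraph, Fintype.sum_pow, sum_comm (γ := Fin a → V)]

lemma graphDensity_bipGraph_nonneg {V : Type*} [Fintype V] {a : ℕ} (ha : Even a) (b : ℕ)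
    (W : V → V → ℝ) : 0 ≤ graphDensity (bipGraph a b) W := by
  rw [graphDensity_bipGraph_eq_sum_pow_left]
  exact div_nonneg (sum_nonneg fun y _ => ha.pow_nonneg _) (by positivity)

lemma graphDensity_bipGraph_eq_sum_pow_right {V : Type*} [Fintype V] (a b : ℕ)
    (W : V → V → ℝ) :
    graphDensity (bipGraph a b) W =
      (∑ u : Fin a → V, (∑ v, ∏ i, W (u i) v) ^ b) / (Fintype.card V : ℝ) ^ (a + b) := by
  simp only [graphDensity_bipGraph, Fintype.sum_pow, prod_comm (γ := Fin a)]

noncomputable def kernelCodegree {V : Type*} [Fintype V] (W : V → V → ℝ) (a c : V) : ℝ :=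
  (∑ v, W a v * W c v) / Fintype.card V

lemma graphDensity_bipGraph_two {V : Type*} [Fintype V] (b : ℕ) (W : V → V → ℝ) :
    graphDensity (bipGraph 2 b) W =
      (∑ a, ∑ c, kernelCodegree W a c ^ b) / (Fintype.card V : ℝ) ^ 2 := by
  rw [graphDensity_bipGraph_eq_sum_pow_right, ← (piFinTwoEquiv fun _ => V).symm.sum_comp,
    Fintype.sum_prod_type]
  simp only [kernelCodegree, div_pow, ← sum_div, div_div, ← pow_add, add_comm b,
    Fin.prod_univ_two]
  rfl

lemma kernelCodegree_self_le_one {V : Type*} [Fintype V] {W : V → V → ℝ}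
    (hW : ∀ x y, |W x y| ≤ 1) (a : V) : kernelCodegree W a a ≤ 1 := by
  refine div_le_one_of_le₀ ?_ (Nat.cast_nonneg _)
  calc ∑ v, W a v * W a v ≤ ∑ _v : V, (1 : ℝ) :=
        sum_le_sum fun v _ => by
          rw [← abs_mul_self, abs_mul]
          exact mul_le_one₀ (hW a v) (abs_nonneg _) (hW a v)
    _ = Fintype.card V := by simp

lemma sum_sum_pow_le_of_offDiag_le {ι : Type*} [Fintype ι] (d : ι → ι → ℝ) {m : ℕ}
    (hm : Odd m) {ν : ℝ} (hν : 0 ≤ ν) (hdiag : ∀ a, d a a ≤ 1)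
    (hoff : ∀ a c, a ≠ c → d a c ≤ ν) :
    ∑ a, ∑ c, d a c ^ m ≤ Fintype.card ι + Fintype.card ι ^ 2 * ν ^ m := by
  classical
  have hνm : 0 ≤ ν ^ m := pow_nonneg hν m
  have hterm : ∀ a c, d a c ^ m ≤ (if a = c then 1 else 0) + ν ^ m := by
    intro a c
    by_cases hac : a = c
    · subst hac
      have h := hm.strictMono_pow.monotone (hdiag a)
      rw [one_pow] at h
      rw [if_pos rfl]
      linarith
    · simpa [hac] using hm.strictMono_pow.monotone (hoff a c hac)
  calc ∑ a, ∑ c, d a c ^ m ≤ ∑ a : ι, ∑ c : ι, ((if a = c then 1 else 0) + ν ^ m) :=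
        sum_le_sum fun a _ => sum_le_sum fun c _ => hterm a c
    _ = Fintype.card ι + Fintype.card ι ^ 2 * ν ^ m := by
        simp only [sum_add_distrib, sum_ite_eq, mem_univ, if_true, sum_const, card_univ,
          nsmul_eq_mul, mul_one]
        ring

lemma graphDensity_bipGraph_two_le {V : Type*} [Fintype V] [Nonempty V] {W : V → V → ℝ}
    {b : ℕ} (hb : Odd b) (hW : ∀ x y, |W x y| ≤ 1) {ν : ℝ} (hν : 0 ≤ ν)
    (hoff : ∀ a c, a ≠ c → kernelCodegree W a c ≤ ν) :
    graphDensity (bipGraph 2 b) W ≤ ν ^ b + (Fintype.card V : ℝ)⁻¹ := by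
  have hn : (0 : ℝ) < Fintype.card V := Nat.cast_pos.mpr Fintype.card_pos
  rw [graphDensity_bipGraph_two, div_le_iff₀ (by positivity)]
  calc ∑ a, ∑ c, kernelCodegree W a c ^ b
      ≤ Fintype.card V + Fintype.card V ^ 2 * ν ^ b :=
        sum_sum_pow_le_of_offDiag_le _ hb hν (kernelCodegree_self_le_one hW) hoff
    _ = (ν ^ b + (Fintype.card V : ℝ)⁻¹) * Fintype.card V ^ 2 := by
        field_simp
        ring

lemma abs_fP_le_one {V : Type*} (G : SimpleGraph V) [DecidableRel G.Adj] {p : ℝ}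
    (hp : p ∈ Set.Icc (0 : ℝ) 1) (x y : V) : |fP G p x y| ≤ 1 := by
  obtain ⟨hp0, hp1⟩ := hp
  rw [abs_le, fP, adjKernel]
  split_ifs <;> constructor <;> linarith

lemma fP_comm {V : Type*} (G : SimpleGraph V) [DecidableRel G.Adj] (p : ℝ) (x y : V) :
    fP G p x y = fP G p y x := by
  simp only [fP, adjKernel, G.adj_comm]

lemma nuP_nonneg {V : Type*} [Fintype V] (G : SimpleGraph V) [DecidableRel G.Adj] (p : ℝ) :
    0 ≤ nuP G p :=
  Real.iSup_nonneg fun _ => le_max_left _ _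

lemma kernelCodegree_fP_le_nuP {V : Type*} [Fintype V] (G : SimpleGraph V)
    [DecidableRel G.Adj] (p : ℝ) {a c : V} (hac : a ≠ c) :
    kernelCodegree (fP G p) a c ≤ nuP G p := by
  have h := le_ciSup (Set.finite_range fun q : {q : V × V // q.1 ≠ q.2} =>
      max 0 ((∑ z : V, fP G p q.val.1 z * fP G p z q.val.2) / (Fintype.card V : ℝ))).bddAbove
    ⟨(a, c), hac⟩
  simp only [fP_comm G p _ c] at h
  exact (le_max_right _ _).trans h

/-- If `G` is a finite simple graph on `n ≥ 1` vertices, `p ∈ (0,1)`, and `b ≥ 1` is an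
integer, then `0 ≤ t_{K_{2,2b−1}}(f_{p,G}) ≤ ν_{p,G}^{2b−1} + n⁻¹`. -/
theorem density_K2odd_f_bound {V : Type*} [Fintype V] (G : SimpleGraph V)
    [DecidableRel G.Adj] (n : ℕ) (hn : Fintype.card V = n) (hn1 : 1 ≤ n)
    (p : ℝ) (hp : p ∈ Set.Ioo (0 : ℝ) 1) (b : ℕ) (hb : 1 ≤ b) :
    0 ≤ graphDensity (bipGraph 2 (2 * b - 1)) (fP G p) ∧
      graphDensity (bipGraph 2 (2 * b - 1)) (fP G p) ≤
        nuP G p ^ (2 * b - 1) + (n : ℝ)⁻¹ := by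
  have : Nonempty V := Fintype.card_pos_iff.mp (by omega)
  have hodd : Odd (2 * b - 1) := ⟨b - 1, by omega⟩
  refine ⟨graphDensity_bipGraph_nonneg even_two _ _, hn ▸ ?_⟩
  exact graphDensity_bipGraph_two_le hodd (abs_fP_le_one G (Set.Ioo_subset_Icc_self hp))
    (nuP_nonneg G p) fun _ _ => kernelCodegree_fP_le_nuP G p
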